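/- arXiv:2411.11793 — 2 statements merged into one kernel-verified Lean document; each statement's English description precedes it below -/
import Mathlib

section
/- Let Γ be a w-potential game with potential P satisfying the regularity assumptions, and let {s^k}_{k≥0} be a best-response sequence. Then every cluster point of the sequence {s^k}_{k≥1} is a Nash equilibrium of Γ, i.e., if a subsequence s^{φ(k)} converges to s* ∈ S, then P_i(s*) ≥ P_i(x_i, s*_{−i}) for all i ∈ [m] and all x_i ∈ S_i. -/
/-!
At every single-player update of a best-response sequence, strong concavity of the updating
player's payoff makes the potential grow by at least `α i / (2 * w i)` times the squared step.
The potential is continuous on the compact strategy space: its increments along one coordinate are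
payoff increments divided by `w i`, and the payoffs are Lipschitz in the own strategy because the
Lipschitz gradients are bounded there. So the monotone sequence of potential values converges and
all steps tend to zero. Along the subsequence, the profile that each player best-responds to
therefore also tends to the cluster point, and the best-response inequality, read through the
potential, passes to the limit.
-/

open Finset Filter

/-- A best-response sequence: at stage `k+1`, players sequentially update,
player `i` best-responding to the already-updated strategies of players `j < i`
and the previous strategies of players `j > i`. -/
def IsBRSeq {m d : ℕ} (S : Fin m → Set (EuclideanSpace ℝ (Fin d)))
    (Pay : Fin m → (Fin m → EuclideanSpace ℝ (Fin d)) → ℝ)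
    (s : ℕ → Fin m → EuclideanSpace ℝ (Fin d)) : Prop :=
  (∀ i, s 0 i ∈ S i) ∧
  ∀ k : ℕ, ∀ i : Fin m,
    s (k + 1) i ∈ S i ∧
    ∀ x ∈ S i,
      Pay i (Function.update (fun j => if (j : ℕ) < (i : ℕ) then s (k + 1) j else s k j) i x) ≤
      Pay i (Function.update (fun j => if (j : ℕ) < (i : ℕ) then s (k + 1) j else s k j) i
        (s (k + 1) i))

open Function Set Topology

section Hybrid

variable {α : Type*} {m : ℕ}

def hybrid (τ σ : Fin m → α) (n : ℕ) : Fin m → α :=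
  fun j => if (j : ℕ) < n then τ j else σ j

variable (τ σ : Fin m → α)

@[simp] lemma hybrid_zero : hybrid τ σ 0 = σ := by
  funext j; simp [hybrid]

@[simp] lemma hybrid_length : hybrid τ σ m = τ := by
  funext j; simp [hybrid]

lemma hybrid_apply_self (i : Fin m) : hybrid τ σ i i = σ i := by
  simp [hybrid]

lemma hybrid_succ (i : Fin m) : hybrid τ σ (i + 1) = update (hybrid τ σ i) i (τ i) := by
  funext j
  rcases eq_or_ne j i with rfl | hji
  · simp [hybrid]
  · have hlt : (j : ℕ) < i + 1 ↔ (j : ℕ) < i := by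
      have := Fin.val_ne_of_ne hji
      omega
    simp only [hybrid, update_of_ne hji, hlt]

lemma hybrid_mem_pi {S : Fin m → Set α} (hτ : ∀ j, τ j ∈ S j) (hσ : ∀ j, σ j ∈ S j) (n : ℕ) :
    ∀ j, hybrid τ σ n j ∈ S j := fun j => by
  unfold hybrid
  split_ifs
  exacts [hτ j, hσ j]

lemma sum_sub_hybrid {G : Type*} [AddCommGroup G] (f : (Fin m → α) → G) :
    ∑ i : Fin m, (f (hybrid τ σ (i + 1)) - f (hybrid τ σ i)) = f τ - f σ := by
  rw [Fin.sum_univ_eq_sum_range (fun n => f (hybrid τ σ (n + 1)) - f (hybrid τ σ n)),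
    sum_range_sub (fun n => f (hybrid τ σ n)), hybrid_length, hybrid_zero]

lemma tendsto_hybrid [TopologicalSpace α] {β : Type*} {l : Filter β} {a b : β → Fin m → α}
    {v : Fin m → α} (ha : Tendsto a l (𝓝 v)) (hb : Tendsto b l (𝓝 v)) (n : ℕ) :
    Tendsto (fun k => hybrid (a k) (b k) n) l (𝓝 v) := by
  refine tendsto_pi_nhds.2 fun j => ?_
  by_cases hj : (j : ℕ) < n
  · simpa [hybrid, hj] using tendsto_pi_nhds.1 ha j
  · simpa [hybrid, hj] using tendsto_pi_nhds.1 hb j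

end Hybrid

lemma abs_sub_le_sum_of_abs_update_sub_le {ι E : Type*} [Fintype ι] [DecidableEq ι]
    [SeminormedAddCommGroup E] {S : ι → Set E} {f : (ι → E) → ℝ} {K : ι → ℝ}
    (hf : ∀ σ : ι → E, (∀ j, σ j ∈ S j) → ∀ i, ∀ x ∈ S i,
      |f (update σ i x) - f σ| ≤ K i * ‖x - σ i‖)
    {τ σ : ι → E} (hτ : ∀ j, τ j ∈ S j) (hσ : ∀ j, σ j ∈ S j) :
    |f τ - f σ| ≤ ∑ i, K i * ‖τ i - σ i‖ := by
  have hmem (A : Finset ι) (j : ι) : A.piecewise τ σ j ∈ S j :=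
    A.piecewise_cases τ σ (· ∈ S j) (hτ j) (hσ j)
  have key (A : Finset ι) : |f (A.piecewise τ σ) - f σ| ≤ ∑ i ∈ A, K i * ‖τ i - σ i‖ := by
    induction A using Finset.induction_on with
    | empty => simp
    | insert a A ha ih =>
      have hstep := hf _ (hmem A) a (τ a) (hτ a)
      rw [A.piecewise_eq_of_notMem _ _ ha] at hstep
      rw [Finset.piecewise_insert, sum_insert ha]
      exact (abs_sub_le _ _ _).trans (add_le_add hstep ih)
  simpa using key univ

lemma continuousOn_of_norm_sub_le {X F : Type*} [TopologicalSpace X] [SeminormedAddCommGroup F]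
    {g : X → F} {s : Set X} {ρ : X → X → ℝ} (hρ : ∀ x ∈ s, Continuous (ρ x))
    (hρ0 : ∀ x ∈ s, ρ x x = 0) (h : ∀ x ∈ s, ∀ y ∈ s, ‖g y - g x‖ ≤ ρ x y) :
    ContinuousOn g s := by
  intro x hx
  rw [ContinuousWithinAt, tendsto_iff_norm_sub_tendsto_zero]
  have hlim := (hρ x hx).tendsto x
  rw [hρ0 x hx] at hlim
  exact squeeze_zero' (Eventually.of_forall fun _ => norm_nonneg _)
    (eventually_nhdsWithin_of_forall fun y hy => h x hx y hy) (hlim.mono_left nhdsWithin_le_nhds)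

lemma StrongConcaveOn.add_sq_norm_sub_le_of_isMaxOn {E : Type*} [NormedAddCommGroup E]
    [NormedSpace ℝ E] {s : Set E} {a : ℝ} {f : E → ℝ} (hf : StrongConcaveOn s a f) {x y : E}
    (hx : x ∈ s) (hy : y ∈ s) (hmax : IsMaxOn f s x) :
    f y + a / 2 * ‖y - x‖ ^ 2 ≤ f x := by
  set c := a / 2 * ‖y - x‖ ^ 2
  -- on the chord from `x` to `y`, strong concavity and maximality at `x` leave an error `t * c`
  have hchord : ∀ t ∈ Ioo (0 : ℝ) 1, f y + c - f x ≤ t * c := by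
    intro t ⟨ht0, ht1⟩
    have hconc := hf.2 hy hx ht0.le (sub_nonneg.2 ht1.le) (add_sub_cancel t 1)
    have hle : f (t • y + (1 - t) • x) ≤ f x :=
      hmax (hf.1 hy hx ht0.le (sub_nonneg.2 ht1.le) (add_sub_cancel t 1))
    simp only [smul_eq_mul] at hconc
    have key : t * (f y + c - f x - t * c) ≤ 0 := by linear_combination hconc + hle
    nlinarith
  have hlim : Tendsto (fun t : ℝ => t * c) (𝓝[>] 0) (𝓝 0) := by
    simpa using (tendsto_id.mul_const c).mono_left (nhdsWithin_le_nhds (a := (0 : ℝ)))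
  linarith [ge_of_tendsto hlim (eventually_of_mem (Ioo_mem_nhdsGT one_pos) hchord)]

lemma tendsto_nhds_zero_of_add_le_succ {u v : ℕ → ℝ} (hu : BddAbove (range u))
    (hv : ∀ k, 0 ≤ v k) (h : ∀ k, u k + v k ≤ u (k + 1)) : Tendsto v atTop (𝓝 0) := by
  have hmono : Monotone u := monotone_nat_of_le_succ fun k => by linarith [h k, hv k]
  have hlim := tendsto_atTop_ciSup hmono hu
  have hincr : Tendsto (fun k => u (k + 1) - u k) atTop (𝓝 0) := by
    simpa using (hlim.comp (tendsto_add_atTop_nat 1)).sub hlim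
  exact squeeze_zero hv (fun k => by linarith [h k]) hincr

lemma Convex.abs_image_sub_le_of_norm_hasGradientAt_le {E : Type*} [NormedAddCommGroup E]
    [InnerProductSpace ℝ E] [CompleteSpace E] {s : Set E} (hs : Convex ℝ s) {f : E → ℝ}
    {f' : E → E} {C : ℝ} (hf : ∀ z ∈ s, HasGradientAt f (f' z) z) (hC : ∀ z ∈ s, ‖f' z‖ ≤ C)
    {x y : E} (hx : x ∈ s) (hy : y ∈ s) : |f y - f x| ≤ C * ‖y - x‖ :=
  hs.norm_image_sub_le_of_norm_hasFDerivWithin_le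
    (fun z hz => (hf z hz).hasFDerivAt.hasFDerivWithinAt)
    (fun z hz => by simpa only [LinearIsometryEquiv.norm_map] using hC z hz) hx hy

lemma continuousOn_of_norm_sub_le_mul_sqrt_sum_sq {ι E F : Type*} [Fintype ι]
    [SeminormedAddCommGroup E] [SeminormedAddCommGroup F] {g : (ι → E) → F} {s : Set (ι → E)}
    {L : ℝ} (h : ∀ x ∈ s, ∀ y ∈ s, ‖g x - g y‖ ≤ L * √(∑ j, ‖x j - y j‖ ^ 2)) :
    ContinuousOn g s :=
  continuousOn_of_norm_sub_le (ρ := fun x y => L * √(∑ j, ‖y j - x j‖ ^ 2))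
    (fun _ _ => by fun_prop) (fun _ _ => by simp) fun x hx y hy => h y hy x hx

section PotentialGame

variable {ι E : Type*} [DecidableEq ι]

def IsWeightedPotential (S : ι → Set E) (Pay : ι → (ι → E) → ℝ) (w : ι → ℝ)
    (P : (ι → E) → ℝ) : Prop :=
  ∀ (i : ι) (s : ι → E), (∀ j, s j ∈ S j) → ∀ x ∈ S i,
    Pay i s - Pay i (update s i x) = w i * (P s - P (update s i x))

def IsNashEquilibrium (S : ι → Set E) (Pay : ι → (ι → E) → ℝ) (s : ι → E) : Prop :=
  ∀ i, ∀ x ∈ S i, Pay i (update s i x) ≤ Pay i s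

variable {S : ι → Set E} {Pay : ι → (ι → E) → ℝ} {w : ι → ℝ} {P : (ι → E) → ℝ}

lemma forall_update_mem {σ : ι → E} (hσ : ∀ j, σ j ∈ S j) {i : ι} {x : E} (hx : x ∈ S i) :
    ∀ j, update σ i x j ∈ S j := fun j => by
  rcases eq_or_ne j i with rfl | hji
  · simpa using hx
  · simpa [hji] using hσ j

lemma IsWeightedPotential.update_sub_update (hpot : IsWeightedPotential S Pay w P)
    {σ : ι → E} (hσ : ∀ j, σ j ∈ S j) {i : ι} {x y : E} (hx : x ∈ S i) (hy : y ∈ S i) :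
    Pay i (update σ i y) - Pay i (update σ i x) = w i * (P (update σ i y) - P (update σ i x)) := by
  simpa using hpot i _ (forall_update_mem hσ hy) x hx

lemma IsWeightedPotential.payoff_update_le_iff (hpot : IsWeightedPotential S Pay w P)
    (hw : ∀ i, 0 < w i) {σ : ι → E} (hσ : ∀ j, σ j ∈ S j) {i : ι} {x y : E} (hx : x ∈ S i)
    (hy : y ∈ S i) :
    Pay i (update σ i x) ≤ Pay i (update σ i y) ↔ P (update σ i x) ≤ P (update σ i y) := by
  rw [← sub_nonneg, hpot.update_sub_update hσ hx hy, mul_nonneg_iff_of_pos_left (hw i), sub_nonneg]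

def HasStronglyConcavePayoffs [NormedAddCommGroup E] [NormedSpace ℝ E] (S : ι → Set E)
    (Pay : ι → (ι → E) → ℝ) (α : ι → ℝ) : Prop :=
  ∀ (i : ι) (σ : ι → E), (∀ j, σ j ∈ S j) →
    StrongConcaveOn (S i) (α i) (fun x => Pay i (update σ i x))

variable [Fintype ι] [NormedAddCommGroup E] [InnerProductSpace ℝ E] [CompleteSpace E]

lemma IsWeightedPotential.continuousOn (hpot : IsWeightedPotential S Pay w P) (hw : ∀ i, 0 < w i)
    (hScpt : ∀ i, IsCompact (S i)) (hScvx : ∀ i, Convex ℝ (S i)) {gradP : ι → (ι → E) → E}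
    (hgrad : ∀ (i : ι) (s : ι → E), (∀ j, s j ∈ S j) →
      HasGradientAt (fun x => Pay i (update s i x)) (gradP i s) (s i))
    {L : ℝ} (hLip : ∀ (i : ι) (s s' : ι → E), (∀ j, s j ∈ S j) → (∀ j, s' j ∈ S j) →
      ‖gradP i s - gradP i s'‖ ≤ L * √(∑ j, ‖s j - s' j‖ ^ 2)) :
    ContinuousOn P (univ.pi S) := by
  have hbound (i : ι) : ∃ M, ∀ σ ∈ univ.pi S, ‖gradP i σ‖ ≤ M :=
    (isCompact_univ_pi hScpt).exists_bound_of_continuousOn <|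
      continuousOn_of_norm_sub_le_mul_sqrt_sum_sq fun σ hσ τ hτ =>
        hLip i σ τ (mem_univ_pi.1 hσ) (mem_univ_pi.1 hτ)
  choose M hM using hbound
  have hcoord (σ : ι → E) (hσ : ∀ j, σ j ∈ S j) (i : ι) (x : E) (hx : x ∈ S i) :
      |P (update σ i x) - P σ| ≤ M i / w i * ‖x - σ i‖ := by
    have hPay : |Pay i (update σ i x) - Pay i (update σ i (σ i))| ≤ M i * ‖x - σ i‖ := by
      refine (hScvx i).abs_image_sub_le_of_norm_hasGradientAt_le
        (f := fun z => Pay i (update σ i z)) (fun z hz => ?_)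
        (fun z hz => hM i _ (mem_univ_pi.2 (forall_update_mem hσ hz))) (hσ i) hx
      simpa using hgrad i (update σ i z) (forall_update_mem hσ hz)
    rw [hpot.update_sub_update hσ (hσ i) hx, update_eq_self, abs_mul, abs_of_pos (hw i)] at hPay
    rw [div_mul_eq_mul_div, le_div_iff₀ (hw i)]
    linarith
  exact continuousOn_of_norm_sub_le (fun _ _ => by fun_prop) (fun _ _ => by simp)
    fun σ hσ τ hτ => abs_sub_le_sum_of_abs_update_sub_le hcoord (mem_univ_pi.1 hτ) (mem_univ_pi.1 hσ)

end PotentialGame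

section BestResponse

variable {m d : ℕ} {S : Fin m → Set (EuclideanSpace ℝ (Fin d))}
  {Pay : Fin m → (Fin m → EuclideanSpace ℝ (Fin d)) → ℝ} {w α : Fin m → ℝ}
  {P : (Fin m → EuclideanSpace ℝ (Fin d)) → ℝ} {s : ℕ → Fin m → EuclideanSpace ℝ (Fin d)}

lemma IsBRSeq.mem (hs : IsBRSeq S Pay s) : ∀ k j, s k j ∈ S j
  | 0 => hs.1
  | k + 1 => fun j => (hs.2 k j).1

lemma IsBRSeq.isMaxOn (hs : IsBRSeq S Pay s) (k : ℕ) (i : Fin m) :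
    IsMaxOn (fun x => Pay i (update (hybrid (s (k + 1)) (s k) i) i x)) (S i) (s (k + 1) i) :=
  fun x hx => (hs.2 k i).2 x hx

lemma IsBRSeq.potential_add_le_hybrid_succ (hs : IsBRSeq S Pay s)
    (hconc : HasStronglyConcavePayoffs S Pay α)
    (hpot : IsWeightedPotential S Pay w P) (hw : ∀ i, 0 < w i) (k : ℕ) (i : Fin m) :
    P (hybrid (s (k + 1)) (s k) i) + α i / (2 * w i) * ‖s (k + 1) i - s k i‖ ^ 2 ≤
      P (hybrid (s (k + 1)) (s k) (i + 1)) := by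
  set σ := hybrid (s (k + 1)) (s k) i
  have hσ : ∀ j, σ j ∈ S j := hybrid_mem_pi _ _ (hs.mem (k + 1)) (hs.mem k) i
  have hgain := (hconc i σ hσ).add_sq_norm_sub_le_of_isMaxOn (hs.mem (k + 1) i) (hs.mem k i)
    (hs.isMaxOn k i)
  have hpay := hpot.update_sub_update hσ (hs.mem k i) (hs.mem (k + 1) i)
  have hσi : update σ i (s k i) = σ := by
    rw [← hybrid_apply_self (s (k + 1)) (s k) i, update_eq_self]
  simp only [hσi, norm_sub_rev (s k i)] at hgain hpay
  rw [hybrid_succ, ← div_div, div_mul_eq_mul_div, ← le_sub_iff_add_le', div_le_iff₀ (hw i)]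
  linarith

lemma IsBRSeq.potential_add_le_succ (hs : IsBRSeq S Pay s)
    (hconc : HasStronglyConcavePayoffs S Pay α)
    (hpot : IsWeightedPotential S Pay w P) (hw : ∀ i, 0 < w i) (hα : ∀ i, 0 ≤ α i) (k : ℕ)
    (i : Fin m) :
    P (s k) + α i / (2 * w i) * ‖s (k + 1) i - s k i‖ ^ 2 ≤ P (s (k + 1)) := by
  have hgain_nonneg (j : Fin m) : 0 ≤ α j / (2 * w j) * ‖s (k + 1) j - s k j‖ ^ 2 := by
    have := hw j; have := hα j; positivity
  have htotal : ∑ j, α j / (2 * w j) * ‖s (k + 1) j - s k j‖ ^ 2 ≤ P (s (k + 1)) - P (s k) := by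
    rw [← sum_sub_hybrid (s (k + 1)) (s k) P]
    exact sum_le_sum fun j _ =>
      le_sub_iff_add_le'.2 (hs.potential_add_le_hybrid_succ hconc hpot hw k j)
  linarith [single_le_sum (fun j _ => hgain_nonneg j) (mem_univ i)]

lemma IsBRSeq.tendsto_sub_nhds_zero (hs : IsBRSeq S Pay s)
    (hconc : HasStronglyConcavePayoffs S Pay α)
    (hpot : IsWeightedPotential S Pay w P) (hw : ∀ i, 0 < w i) (hα : ∀ i, 0 < α i)
    (hP : BddAbove (P '' univ.pi S)) (i : Fin m) :
    Tendsto (fun k => s (k + 1) i - s k i) atTop (𝓝 0) := by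
  have hbdd : BddAbove (range fun k => P (s k)) :=
    hP.mono (range_subset_iff.2 fun k => mem_image_of_mem P (mem_univ_pi.2 (hs.mem k)))
  have hc : 0 < α i / (2 * w i) := by have := hw i; have := hα i; positivity
  have hgain : Tendsto (fun k => α i / (2 * w i) * ‖s (k + 1) i - s k i‖ ^ 2) atTop (𝓝 0) :=
    tendsto_nhds_zero_of_add_le_succ hbdd (fun k => by positivity)
      (hs.potential_add_le_succ hconc hpot hw (fun j => (hα j).le) · i)
  have hsq : Tendsto (fun k => ‖s (k + 1) i - s k i‖ ^ 2) atTop (𝓝 0) := by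
    simpa only [← mul_assoc, inv_mul_cancel₀ hc.ne', one_mul, mul_zero] using
      hgain.const_mul (α i / (2 * w i))⁻¹
  rw [tendsto_zero_iff_norm_tendsto_zero]
  simpa [Real.sqrt_sq (norm_nonneg _)] using hsq.sqrt

lemma IsBRSeq.isNashEquilibrium_of_tendsto (hs : IsBRSeq S Pay s)
    (hconc : HasStronglyConcavePayoffs S Pay α)
    (hpot : IsWeightedPotential S Pay w P) (hw : ∀ i, 0 < w i) (hα : ∀ i, 0 < α i)
    (hPcont : ContinuousOn P (univ.pi S)) (hP : BddAbove (P '' univ.pi S)) {ψ : ℕ → ℕ}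
    (hψ : Tendsto ψ atTop atTop) {sstar : Fin m → EuclideanSpace ℝ (Fin d)}
    (hstar : ∀ i, sstar i ∈ S i) (hconv : Tendsto (fun k => s (ψ k + 1)) atTop (𝓝 sstar)) :
    IsNashEquilibrium S Pay sstar := by
  have hprev : Tendsto (fun k => s (ψ k)) atTop (𝓝 sstar) := by
    have hstep : Tendsto (fun k => s (ψ k + 1) - s (ψ k)) atTop (𝓝 0) :=
      tendsto_pi_nhds.2 fun i => (hs.tendsto_sub_nhds_zero hconc hpot hw hα hP i).comp hψ
    simpa using hconv.sub hstep
  intro i x hx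
  set τ := fun k => hybrid (s (ψ k + 1)) (s (ψ k)) i
  have hτ (k : ℕ) : ∀ j, τ k j ∈ S j := hybrid_mem_pi _ _ (hs.mem _) (hs.mem _) i
  have hlim {y : ℕ → EuclideanSpace ℝ (Fin d)} {y₀ : EuclideanSpace ℝ (Fin d)}
      (hy : ∀ k, y k ∈ S i) (hy₀ : y₀ ∈ S i) (h : Tendsto y atTop (𝓝 y₀)) :
      Tendsto (fun k => P (update (τ k) i (y k))) atTop (𝓝 (P (update sstar i y₀))) :=
    (hPcont _ (mem_univ_pi.2 (forall_update_mem hstar hy₀))).tendsto.comp <|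
      tendsto_nhdsWithin_iff.2 ⟨(tendsto_hybrid hconv hprev i).update i h,
        Eventually.of_forall fun k => mem_univ_pi.2 (forall_update_mem (hτ k) (hy k))⟩
  have hBR (k : ℕ) : P (update (τ k) i x) ≤ P (update (τ k) i (s (ψ k + 1) i)) :=
    (hpot.payoff_update_le_iff hw (hτ k) hx (hs.mem _ i)).1 (hs.isMaxOn (ψ k) i hx)
  have hPstar : P (update sstar i x) ≤ P (update sstar i (sstar i)) :=
    le_of_tendsto_of_tendsto' (hlim (fun _ => hx) hx tendsto_const_nhds)
      (hlim (fun _ => hs.mem _ i) (hstar i) (tendsto_pi_nhds.1 hconv i)) hBR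
  simpa using (hpot.payoff_update_le_iff hw hstar hx (hstar i)).2 hPstar

end BestResponse

theorem potential_game_BR_cluster_point_is_NE_general
    (m d : ℕ)
    (S : Fin m → Set (EuclideanSpace ℝ (Fin d)))
    (hScpt : ∀ i, IsCompact (S i))
    (hScvx : ∀ i, Convex ℝ (S i))
    (Pay : Fin m → (Fin m → EuclideanSpace ℝ (Fin d)) → ℝ)
    (α : Fin m → ℝ) (hα : ∀ i, 0 < α i)
    (hconc : ∀ (i : Fin m) (s : Fin m → EuclideanSpace ℝ (Fin d)), (∀ j, s j ∈ S j) →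
      StrongConcaveOn (S i) (α i) (fun x => Pay i (Function.update s i x)))
    (gradP : Fin m → (Fin m → EuclideanSpace ℝ (Fin d)) → EuclideanSpace ℝ (Fin d))
    (hgrad : ∀ (i : Fin m) (s : Fin m → EuclideanSpace ℝ (Fin d)), (∀ j, s j ∈ S j) →
      HasGradientAt (fun x => Pay i (Function.update s i x)) (gradP i s) (s i))
    (L : ℝ)
    (hLip : ∀ (i : Fin m) (s s' : Fin m → EuclideanSpace ℝ (Fin d)),
      (∀ j, s j ∈ S j) → (∀ j, s' j ∈ S j) →
      ‖gradP i s - gradP i s'‖ ≤ L * Real.sqrt (∑ j, ‖s j - s' j‖ ^ 2))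
    (w : Fin m → ℝ) (hw : ∀ i, 0 < w i)
    (P : (Fin m → EuclideanSpace ℝ (Fin d)) → ℝ)
    (hpot : ∀ (i : Fin m) (s : Fin m → EuclideanSpace ℝ (Fin d)), (∀ j, s j ∈ S j) →
      ∀ x ∈ S i,
      Pay i s - Pay i (Function.update s i x) = w i * (P s - P (Function.update s i x)))
    (s : ℕ → Fin m → EuclideanSpace ℝ (Fin d)) (hs : IsBRSeq S Pay s)
    (φ : ℕ → ℕ) (hφ : StrictMono φ) (hφ1 : ∀ k, 1 ≤ φ k)
    (sstar : Fin m → EuclideanSpace ℝ (Fin d)) (hstar : ∀ i, sstar i ∈ S i)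
    (hconv : Tendsto (fun k => s (φ k)) atTop (nhds sstar)) :
    ∀ i : Fin m, ∀ x ∈ S i,
      Pay i (Function.update sstar i x) ≤ Pay i sstar := by
  have hPcont := IsWeightedPotential.continuousOn hpot hw hScpt hScvx hgrad hLip
  exact hs.isNashEquilibrium_of_tendsto hconc hpot hw hα hPcont
    ((isCompact_univ_pi hScpt).bddAbove_image hPcont)
    ((tendsto_sub_atTop_nat 1).comp hφ.tendsto_atTop) hstar
    (hconv.congr fun k => by simp [Nat.sub_add_cancel (hφ1 k)])

/-- Every cluster point of a best-response sequence in a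
`w`-potential game is a Nash equilibrium. -/
theorem potential_game_BR_cluster_point_is_NE
    (m d : ℕ) (hm : 1 ≤ m)
    (S : Fin m → Set (EuclideanSpace ℝ (Fin d)))
    (hSne : ∀ i, (S i).Nonempty) (hScpt : ∀ i, IsCompact (S i))
    (hScvx : ∀ i, Convex ℝ (S i))
    (Pay : Fin m → (Fin m → EuclideanSpace ℝ (Fin d)) → ℝ)
    (α : Fin m → ℝ) (hα : ∀ i, 0 < α i)
    (hconc : ∀ (i : Fin m) (s : Fin m → EuclideanSpace ℝ (Fin d)), (∀ j, s j ∈ S j) →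
      StrongConcaveOn (S i) (α i) (fun x => Pay i (Function.update s i x)))
    (gradP : Fin m → (Fin m → EuclideanSpace ℝ (Fin d)) → EuclideanSpace ℝ (Fin d))
    (hgrad : ∀ (i : Fin m) (s : Fin m → EuclideanSpace ℝ (Fin d)), (∀ j, s j ∈ S j) →
      HasGradientAt (fun x => Pay i (Function.update s i x)) (gradP i s) (s i))
    (L : ℝ) (hL : 0 < L)
    (hLip : ∀ (i : Fin m) (s s' : Fin m → EuclideanSpace ℝ (Fin d)),
      (∀ j, s j ∈ S j) → (∀ j, s' j ∈ S j) →
      ‖gradP i s - gradP i s'‖ ≤ L * Real.sqrt (∑ j, ‖s j - s' j‖ ^ 2))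
    (w : Fin m → ℝ) (hw : ∀ i, 0 < w i)
    (P : (Fin m → EuclideanSpace ℝ (Fin d)) → ℝ)
    (hpot : ∀ (i : Fin m) (s : Fin m → EuclideanSpace ℝ (Fin d)), (∀ j, s j ∈ S j) →
      ∀ x ∈ S i,
      Pay i s - Pay i (Function.update s i x) = w i * (P s - P (Function.update s i x)))
    (s : ℕ → Fin m → EuclideanSpace ℝ (Fin d)) (hs : IsBRSeq S Pay s)
    (φ : ℕ → ℕ) (hφ : StrictMono φ) (hφ1 : ∀ k, 1 ≤ φ k)
    (sstar : Fin m → EuclideanSpace ℝ (Fin d)) (hstar : ∀ i, sstar i ∈ S i)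
    (hconv : Tendsto (fun k => s (φ k)) atTop (nhds sstar)) :
    ∀ i : Fin m, ∀ x ∈ S i,
      Pay i (Function.update sstar i x) ≤ Pay i sstar :=
  potential_game_BR_cluster_point_is_NE_general m d S hScpt hScvx Pay α hα hconc gradP hgrad L hLip
    w hw P hpot s hs φ hφ hφ1 sstar hstar hconv
end

section
/- With λ_1 = 2 min_{i∈[m]} α_i q_i/(q̄ + q_i/m), λ_2 = 2 max_{i∈[m]} α_i Q_i/(Q̄ + Q_i/m), and λ* the unique solution in (0, m·min_i α_i) of Σ_{i=1}^m λ*/(2mα_i − λ*) = 1, one has 0 < λ_1 ≤ λ* ≤ λ_2. -/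
/-!
With `c_i = 2 m α_i`, the quantity `2 α_i x_i / (x̄ + x_i / m) = c_i x_i / (Σ x + x_i)` is exactly
the `λ < c_i` at which `λ / (c_i - λ)` reaches the share `x_i / Σ x`. At `λ*` the values
`λ* / (c_i - λ*)` sum to `1`, as do the shares, so some `λ* / (c_i - λ*)` is at least its
`q`-share and some `λ* / (c_j - λ*)` is at most its `Q`-share. Hence `λ₁ ≤ λ*` and `λ* ≤ λ₂`.
-/

open Finset

section Threshold

variable {l c x s : ℝ}

theorem div_le_div_sub_iff (hlc : l < c) (hs : 0 < s) (hsx : 0 < s + x) :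
    x / s ≤ l / (c - l) ↔ c * x / (s + x) ≤ l := by
  rw [div_le_div_iff₀ hs (sub_pos.2 hlc), div_le_iff₀ hsx]
  constructor <;> intro h <;> linarith

theorem div_sub_le_div_iff (hlc : l < c) (hs : 0 < s) (hsx : 0 < s + x) :
    l / (c - l) ≤ x / s ↔ l ≤ c * x / (s + x) := by
  rw [div_le_div_iff₀ (sub_pos.2 hlc) hs, le_div_iff₀ hsx]
  constructor <;> intro h <;> linarith

end Threshold

section Shares

variable {ι : Type*} [Fintype ι] {f x : ι → ℝ}

theorem sum_div_sum_self (hx : 0 < ∑ j, x j) : ∑ i, x i / ∑ j, x j = 1 := by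
  rw [← sum_div, div_self hx.ne']

variable [Nonempty ι]

theorem exists_div_sum_le_of_sum_eq_one (hx : 0 < ∑ j, x j) (hf : ∑ i, f i = 1) :
    ∃ i, x i / ∑ j, x j ≤ f i := by
  obtain ⟨i, -, hi⟩ := exists_le_of_sum_le univ_nonempty
    (by rw [sum_div_sum_self hx, hf] : ∑ i, x i / ∑ j, x j ≤ ∑ i, f i)
  exact ⟨i, hi⟩

theorem exists_le_div_sum_of_sum_eq_one (hx : 0 < ∑ j, x j) (hf : ∑ i, f i = 1) :
    ∃ i, f i ≤ x i / ∑ j, x j := by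
  obtain ⟨i, -, hi⟩ := exists_le_of_sum_le univ_nonempty
    (by rw [sum_div_sum_self hx, hf] : ∑ i, f i ≤ ∑ i, x i / ∑ j, x j)
  exact ⟨i, hi⟩

variable {c : ι → ℝ} {l : ℝ}

theorem exists_threshold_le (hx : ∀ i, 0 < x i) (hlc : ∀ i, l < c i)
    (hl : ∑ i, l / (c i - l) = 1) : ∃ i, c i * x i / (∑ j, x j + x i) ≤ l := by
  have hsum : 0 < ∑ j, x j := sum_pos (fun i _ => hx i) univ_nonempty
  obtain ⟨i, hi⟩ := exists_div_sum_le_of_sum_eq_one hsum hl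
  exact ⟨i, (div_le_div_sub_iff (hlc i) hsum (by linarith [hx i])).1 hi⟩

theorem exists_le_threshold (hx : ∀ i, 0 < x i) (hlc : ∀ i, l < c i)
    (hl : ∑ i, l / (c i - l) = 1) : ∃ i, l ≤ c i * x i / (∑ j, x j + x i) := by
  have hsum : 0 < ∑ j, x j := sum_pos (fun i _ => hx i) univ_nonempty
  obtain ⟨i, hi⟩ := exists_le_div_sum_of_sum_eq_one hsum hl
  exact ⟨i, (div_sub_le_div_iff (hlc i) hsum (by linarith [hx i])).1 hi⟩

end Shares

theorem two_mul_div_mean_add_div (m a y S : ℝ) :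
    2 * (a * y / (S / m + y / m)) = 2 * m * a * y / (S + y) := by
  rw [← add_div, div_div_eq_mul_div]
  ring

theorem activation_le_jump_le_saturation_general
    (m : ℕ) (α q Q : Fin m → ℝ)
    (hα : ∀ i, 0 < α i) (hq : ∀ i, 0 < q i) (hqQ : ∀ i, q i ≤ Q i)
    (αmin : ℝ) (hαmin : IsLeast (Set.range α) αmin)
    (qbar : ℝ) (hqbar : qbar = (∑ i, q i) / (m : ℝ))
    (Qbar : ℝ) (hQbar : Qbar = (∑ i, Q i) / (m : ℝ))
    (lam₁ : ℝ)
    (hlam₁ : IsLeast (Set.range fun i => 2 * (α i * q i / (qbar + q i / (m : ℝ)))) lam₁)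
    (lam₂ : ℝ)
    (hlam₂ : IsGreatest (Set.range fun i => 2 * (α i * Q i / (Qbar + Q i / (m : ℝ)))) lam₂)
    (lamstar : ℝ) (hlamstar : lamstar ∈ Set.Ioo 0 ((m : ℝ) * αmin))
    (hlseq : ∑ i, lamstar / (2 * (m : ℝ) * α i - lamstar) = 1) :
    0 < lam₁ ∧ lam₁ ≤ lamstar ∧ lamstar ≤ lam₂ := by
  obtain ⟨i₀, hi₀⟩ := hlam₁.1
  have : Nonempty (Fin m) := ⟨i₀⟩
  subst hqbar hQbar
  simp only [two_mul_div_mean_add_div] at hlam₁ hlam₂ hi₀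
  have hlt : ∀ i, lamstar < 2 * m * α i := fun i => by
    have := mul_le_mul_of_nonneg_left (hαmin.2 ⟨i, rfl⟩) (Nat.cast_nonneg (α := ℝ) m)
    linarith [hlamstar.1, hlamstar.2]
  have hQ : ∀ i, 0 < Q i := fun i => (hq i).trans_le (hqQ i)
  obtain ⟨i, hi⟩ := exists_threshold_le hq hlt hlseq
  obtain ⟨j, hj⟩ := exists_le_threshold hQ hlt hlseq
  refine ⟨?_, (hlam₁.2 ⟨i, rfl⟩).trans hi, hj.trans (hlam₂.2 ⟨j, rfl⟩)⟩
  have hm : (0 : ℝ) < m := Nat.cast_pos.2 i₀.pos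
  have hqsum : 0 < ∑ j, q j := sum_pos (fun i _ => hq i) univ_nonempty
  rw [← hi₀]
  have := hq i₀
  have := hα i₀
  positivity

/-- The activation point `λ₁`, the jump point `λ*`, and the
saturation point `λ₂` satisfy `0 < λ₁ ≤ λ* ≤ λ₂`. -/
theorem activation_le_jump_le_saturation
    (m : ℕ) (hm : 1 ≤ m) (α q Q : Fin m → ℝ)
    (hα : ∀ i, 0 < α i) (hq : ∀ i, 0 < q i) (hqQ : ∀ i, q i ≤ Q i)
    (αmin : ℝ) (hαmin : IsLeast (Set.range α) αmin)
    (qbar : ℝ) (hqbar : qbar = (∑ i, q i) / (m : ℝ))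
    (Qbar : ℝ) (hQbar : Qbar = (∑ i, Q i) / (m : ℝ))
    (lam₁ : ℝ)
    (hlam₁ : IsLeast (Set.range fun i => 2 * (α i * q i / (qbar + q i / (m : ℝ)))) lam₁)
    (lam₂ : ℝ)
    (hlam₂ : IsGreatest (Set.range fun i => 2 * (α i * Q i / (Qbar + Q i / (m : ℝ)))) lam₂)
    (lamstar : ℝ) (hlamstar : lamstar ∈ Set.Ioo 0 ((m : ℝ) * αmin))
    (hlseq : ∑ i, lamstar / (2 * (m : ℝ) * α i - lamstar) = 1) :
    0 < lam₁ ∧ lam₁ ≤ lamstar ∧ lamstar ≤ lam₂ :=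
  activation_le_jump_le_saturation_general m α q Q hα hq hqQ αmin hαmin qbar hqbar Qbar hQbar lam₁
    hlam₁ lam₂ hlam₂ lamstar hlamstar hlseq
end
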